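/- arXiv:2309.14522 — 2 statements merged into one kernel-verified Lean document; each statement's English description precedes it below -/
import Mathlib

section
/- Let n ≥ 1 and let v_1, …, v_n ∈ ℂ be indexed cyclically (v_0 := v_n, v_{n+1} := v_1) with v_j ≠ v_{j−1} for every j = 1, …, n. Let z_1 ∈ ℂ be arbitrary and define z_2, …, z_n inductively by z_{j+1} = R_{v_j, v_{j+1}}(R_{v_{j−1}, v_j}(z_j)) for j = 1, …, n−1, i.e. z_{j+1} is obtained from z_j by the reflection across the line through v_{j−1} and v_j followed by the reflection across the line through v_j and v_{j+1}. Then Σ_{j=1}^{n} conj(z_j)·(v_j − v_{j−1}) = Σ_{j=1}^{n} (conj(v_{j−1})·v_j − v_{j−1}·conj(v_j)); in particular, when v_1, …, v_n are the vertices of a convex polygon w listed counterclockwise, the sum equals 4i·Area(w). -/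
/-! Writing `w_j = R_{v_{j-1},v_j}(z_j)`, the `j`-th summand is
`conj(v_{j−1})·v_j − v_{j−1}·conj(v_j) + (conj v_j − conj v_{j−1})·w_j`. Since reflections are
involutions, `w_{j+1} = R_{v_j,v_{j+1}}(R_{v_j,v_{j+1}}(w_j)) = w_j`, so `w_j` is a constant `w`,
and the surplus `w · Σ_j (conj v_j − conj v_{j−1})` vanishes because this sum telescopes
cyclically. -/

/-- Reflection of `z` across the line through the (distinct) points `a` and `b` in `ℂ`:
`R_{a,b}(z) = a + ((b−a)/(conj b − conj a))·(conj z − conj a)`. -/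
noncomputable def lineReflection (a b z : ℂ) : ℂ :=
  a + ((b - a) / ((starRingEnd ℂ) b - (starRingEnd ℂ) a)) * ((starRingEnd ℂ) z - (starRingEnd ℂ) a)

open Finset

lemma lineReflection_lineReflection {a b : ℂ} (hab : a ≠ b) (z : ℂ) :
    lineReflection a b (lineReflection a b z) = z := by
  have hconj : (starRingEnd ℂ) b - (starRingEnd ℂ) a ≠ 0 :=
    sub_ne_zero.mpr fun h => hab ((starRingEnd ℂ).injective h).symm
  have hsub : b - a ≠ 0 := sub_ne_zero.mpr hab.symm
  simp only [lineReflection, map_add, map_mul, map_sub, map_div₀, Complex.conj_conj]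
  field_simp
  ring

lemma conj_mul_sub_eq_add_mul_lineReflection {a b : ℂ} (hab : a ≠ b) (z : ℂ) :
    (starRingEnd ℂ) z * (b - a) =
      ((starRingEnd ℂ) a * b - a * (starRingEnd ℂ) b) +
        ((starRingEnd ℂ) b - (starRingEnd ℂ) a) * lineReflection a b z := by
  have hconj : (starRingEnd ℂ) b - (starRingEnd ℂ) a ≠ 0 :=
    sub_ne_zero.mpr fun h => hab ((starRingEnd ℂ).injective h).symm
  simp only [lineReflection]
  field_simp
  ring

lemma Fin.eq_zero_of_forall_add_one_eq {α : Type*} {n : ℕ} [NeZero n] {f : Fin n → α}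
    (hf : ∀ j : Fin n, (j : ℕ) + 1 < n → f (j + 1) = f j) (j : Fin n) : f j = f 0 := by
  obtain ⟨m, rfl⟩ := Nat.exists_eq_succ_of_ne_zero (NeZero.ne n)
  induction j using Fin.induction with
  | zero => rfl
  | succ i ih => rw [← Fin.coeSucc_eq_succ, hf _ (by simp), ih]

lemma Fin.sum_sub_comp_sub_one {M : Type*} [AddCommGroup M] {n : ℕ} [NeZero n] (f : Fin n → M) :
    ∑ j : Fin n, (f j - f (j - 1)) = 0 := by
  rw [sum_sub_distrib, ← (Equiv.subRight (1 : Fin n)).sum_comp f]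
  exact sub_self _

/-- Let `v_1, …, v_n ∈ ℂ` be indexed cyclically with consecutive points distinct, let `z_1` be
arbitrary and define `z_{j+1}` from `z_j` by reflecting across the line through `v_{j−1}, v_j`
and then across the line through `v_j, v_{j+1}` (for `j = 1, …, n−1`).  Then
`Σ_j conj(z_j)·(v_j − v_{j−1}) = Σ_j (conj(v_{j−1})·v_j − v_{j−1}·conj(v_j))`,
which is `4i` times the signed area enclosed by the polygon `v_1 v_2 … v_n`. -/
theorem sum_conj_mul_edge_of_double_reflections
    (n : ℕ) [NeZero n] (v z : Fin n → ℂ)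
    (hv : ∀ j : Fin n, v j ≠ v (j - 1))
    (hz : ∀ j : Fin n, (j : ℕ) + 1 < n →
      z (j + 1) = lineReflection (v j) (v (j + 1)) (lineReflection (v (j - 1)) (v j) (z j))) :
    ∑ j : Fin n, (starRingEnd ℂ) (z j) * (v j - v (j - 1)) =
      ∑ j : Fin n, ((starRingEnd ℂ) (v (j - 1)) * v j - v (j - 1) * (starRingEnd ℂ) (v j)) := by
  set w : Fin n → ℂ := fun j => lineReflection (v (j - 1)) (v j) (z j)
  have hw_const : ∀ j, w j = w 0 := Fin.eq_zero_of_forall_add_one_eq fun j hj => by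
    have hne : v j ≠ v (j + 1) := by simpa using (hv (j + 1)).symm
    simp only [w, add_sub_cancel_right, hz j hj, lineReflection_lineReflection hne]
  calc ∑ j : Fin n, (starRingEnd ℂ) (z j) * (v j - v (j - 1))
      = ∑ j : Fin n, (((starRingEnd ℂ) (v (j - 1)) * v j - v (j - 1) * (starRingEnd ℂ) (v j)) +
          ((starRingEnd ℂ) (v j) - (starRingEnd ℂ) (v (j - 1))) * w 0) := by
        refine sum_congr rfl fun j _ => ?_
        rw [conj_mul_sub_eq_add_mul_lineReflection (hv j).symm, ← hw_const j]
    _ = ∑ j : Fin n, ((starRingEnd ℂ) (v (j - 1)) * v j - v (j - 1) * (starRingEnd ℂ) (v j)) := by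
        rw [sum_add_distrib, ← sum_mul, Fin.sum_sub_comp_sub_one (fun j => (starRingEnd ℂ) (v j)),
          zero_mul, add_zero]
end

section
/- Let g ≥ 1 and let V be a 2g-dimensional vector space over ℤ/2ℤ equipped with a nondegenerate alternating bilinear form B; let Q₊ and Q₋ denote the (finite) sets of even and odd quadratic forms on (V, B), respectively. Then for every v ∈ V one has Σ_{q ∈ Q₊} (−1)^{q(v)} − Σ_{q ∈ Q₋} (−1)^{q(v)} = 2^g, where the sums are taken in ℤ. -/
open scoped Classical

/-- The sign `(−1)^c ∈ ℤ` attached to `c ∈ ℤ/2ℤ`: `1` if `c = 0` and `−1` if `c = 1`. -/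
def zmod2Sign (c : ZMod 2) : ℤ := if c = 0 then 1 else -1

/-- A quadratic form on a `ℤ/2ℤ`-vector space `V` relative to a bilinear form `B`:
a function `q : V → ℤ/2ℤ` with `q(u+v) = q(u) + q(v) + B(u,v)`. -/
def IsQuadraticFormZMod2 {V : Type*} [AddCommGroup V] [Module (ZMod 2) V]
    (B : V →ₗ[ZMod 2] V →ₗ[ZMod 2] ZMod 2) (q : V → ZMod 2) : Prop :=
  ∀ x y : V, q (x + y) = q x + q y + B x y

/-- A function `q : V → ℤ/2ℤ` is even if `#{v : q v = 0} > #{v : q v = 1}`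
(equivalently, its Arf invariant is `0`); it is odd otherwise. -/
def IsEvenQF {V : Type*} [Fintype V] (q : V → ZMod 2) : Prop :=
  (Finset.univ.filter fun x : V => q x = 1).card <
    (Finset.univ.filter fun x : V => q x = 0).card

/-!
The Gauss sum `W(q) = ∑ₓ (-1)^{q(x)}` of a quadratic form satisfies `W(q)² = |V| = 4^g`, by
orthogonality of the characters `x ↦ (-1)^{B(x,z)}`, and it is positive exactly when `q` is even.
Hence `2^g` times the left-hand side is `∑_q W(q) (-1)^{q(v)} = ∑ₓ ∑_q (-1)^{q(x)+q(v)}`.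
The quadratic forms are the `q₀ + B(w, ·)` for `w ∈ V`, so the inner sum is `|V|` for `x = v`
and `0` otherwise, and the total is `|V| = 2^g · 2^g`.
-/

open Finset

lemma zmod2Sign_add (a b : ZMod 2) : zmod2Sign (a + b) = zmod2Sign a * zmod2Sign b := by
  fin_cases a <;> fin_cases b <;> rfl

@[simp]
lemma zmod2Sign_zero : zmod2Sign 0 = 1 := rfl

section

variable {V : Type*}

section GaussSum

variable [Fintype V]

def gaussSumZMod2 (q : V → ZMod 2) : ℤ := ∑ x, zmod2Sign (q x)

lemma gaussSumZMod2_eq_card_sub_card (q : V → ZMod 2) :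
    gaussSumZMod2 q = (#{x | q x = 0} : ℤ) - #{x | q x = 1} := by
  have hsign : ∀ c : ZMod 2,
      zmod2Sign c = (if c = 0 then 1 else 0) - (if c = 1 then 1 else 0) := by decide
  simp only [gaussSumZMod2, hsign, sum_sub_distrib, sum_boole]

lemma isEvenQF_iff_gaussSumZMod2_pos (q : V → ZMod 2) : IsEvenQF q ↔ 0 < gaussSumZMod2 q := by
  rw [gaussSumZMod2_eq_card_sub_card, sub_pos, Nat.cast_lt, IsEvenQF]

lemma gaussSumZMod2_eq_ite_mul {q : V → ZMod 2} {N : ℤ} (hN : 0 < N)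
    (h : gaussSumZMod2 q * gaussSumZMod2 q = N * N) :
    gaussSumZMod2 q = (if IsEvenQF q then 1 else -1) * N := by
  rw [isEvenQF_iff_gaussSumZMod2_pos]
  rcases mul_self_eq_mul_self_iff.mp h with h | h <;> rw [h]
  · simp [hN]
  · simp [hN.le]

end GaussSum

variable [AddCommGroup V] [Module (ZMod 2) V]

lemma sum_zmod2Sign_apply [Fintype V] (f : V →ₗ[ZMod 2] ZMod 2) :
    ∑ x, zmod2Sign (f x) = if f = 0 then (Fintype.card V : ℤ) else 0 := by
  split_ifs with hf
  · simp [hf, zmod2Sign]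
  obtain ⟨x₀, hx₀⟩ : ∃ x₀, f x₀ = 1 := by
    by_contra! h
    exact hf (LinearMap.ext fun x => by_contra fun hx => h x (Fin.eq_one_of_ne_zero _ hx))
  have hflip : ∑ x, zmod2Sign (f (x + x₀)) = -∑ x, zmod2Sign (f x) := by
    rw [← sum_neg_distrib]
    refine sum_congr rfl fun x _ => ?_
    rw [map_add, hx₀, zmod2Sign_add, show zmod2Sign 1 = -1 from rfl, mul_neg_one]
  rw [Fintype.sum_equiv (Equiv.addRight x₀) (fun x => zmod2Sign (f (x + x₀)))
    (fun x => zmod2Sign (f x)) fun _ => rfl] at hflip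
  linarith

variable {B : V →ₗ[ZMod 2] V →ₗ[ZMod 2] ZMod 2}

lemma sum_zmod2Sign_apply_apply [Fintype V] (hB : B.SeparatingRight) (z : V) :
    ∑ x, zmod2Sign (B x z) = if z = 0 then (Fintype.card V : ℤ) else 0 := by
  have hz : B.flip z = 0 ↔ z = 0 :=
    ⟨fun h => hB z fun x => LinearMap.congr_fun h x, fun h => by simp [h]⟩
  simpa [hz] using sum_zmod2Sign_apply (B.flip z)

lemma exists_isQuadraticFormZMod2 [Module.Finite (ZMod 2) V] (hB : B.IsAlt) :
    ∃ q : V → ZMod 2, IsQuadraticFormZMod2 B q := by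
  let b := Module.finBasis (ZMod 2) V
  -- `q x = C x x` for the strictly upper triangular half `C` of `B`, since `C + Cᵀ = B`
  let C := Matrix.toLinearMap₂ b b (.of fun i j => if i < j then B (b i) (b j) else 0)
  have hC : C + C.flip = B := by
    refine LinearMap.ext_basis b b fun i j => ?_
    simp only [C, LinearMap.add_apply, LinearMap.flip_apply, Matrix.toLinearMap₂_apply_basis,
      Matrix.of_apply]
    rcases lt_trichotomy i j with h | rfl | h
    · simp [h, h.not_gt]
    · simp [hB.self_eq_zero]
    · simp [h, h.not_gt, ← hB.neg (b i) (b j)]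
  refine ⟨fun x => C x x, fun x y => ?_⟩
  rw [← hC]
  simp only [map_add, LinearMap.add_apply, LinearMap.flip_apply]
  ring

namespace IsQuadraticFormZMod2

variable {q q₀ : V → ZMod 2}

lemma map_zero (hq : IsQuadraticFormZMod2 B q) : q 0 = 0 := by
  simpa using hq 0 0

lemma add_apply_self (hq : IsQuadraticFormZMod2 B q) (w : V) :
    IsQuadraticFormZMod2 B fun x => q x + B w x := by
  intro x y
  simp only [hq x y, map_add]
  ring

lemma exists_eq_add_apply [FiniteDimensional (ZMod 2) V] (hB : B.Nondegenerate)
    (hq₀ : IsQuadraticFormZMod2 B q₀) (hq : IsQuadraticFormZMod2 B q) :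
    ∃ w, q = fun x => q₀ x + B w x := by
  let L : V →+ ZMod 2 := AddMonoidHom.mk' (fun x => q x - q₀ x) fun x y => by
    rw [hq x y, hq₀ x y]
    ring
  refine ⟨(LinearMap.BilinForm.toDual B hB).symm (L.toZModLinearMap 2), funext fun x => ?_⟩
  rw [LinearMap.BilinForm.apply_toDual_symm_apply]
  simp [L]

lemma gaussSumZMod2_mul_self [Fintype V] (hq : IsQuadraticFormZMod2 B q)
    (hB : B.SeparatingRight) : gaussSumZMod2 q * gaussSumZMod2 q = Fintype.card V := by
  calc gaussSumZMod2 q * gaussSumZMod2 q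
      = ∑ x, ∑ z, zmod2Sign (q x) * zmod2Sign (q (x + z)) := by
        rw [gaussSumZMod2, sum_mul_sum]
        refine sum_congr rfl fun x _ => ?_
        exact (Fintype.sum_equiv (Equiv.addLeft x) _ _ fun _ => rfl).symm
    _ = ∑ z, zmod2Sign (q z) * ∑ x, zmod2Sign (B x z) := by
        rw [sum_comm]
        refine sum_congr rfl fun z _ => ?_
        rw [mul_sum]
        refine sum_congr rfl fun x _ => ?_
        rw [← zmod2Sign_add, ← zmod2Sign_add, hq]
        congr 1
        grind
    _ = Fintype.card V := by
        simp only [sum_zmod2Sign_apply_apply hB, mul_ite, mul_zero, sum_ite_eq', mem_univ,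
          if_true, hq.map_zero, zmod2Sign_zero, one_mul]

end IsQuadraticFormZMod2

section SumOverQuadraticForms

variable [Fintype V] [DecidableEq V]

lemma sum_isQuadraticFormZMod2_eq_sum_add_apply {q₀ : V → ZMod 2}
    (hq₀ : IsQuadraticFormZMod2 B q₀) (hB : B.Nondegenerate) (f : (V → ZMod 2) → ℤ) :
    ∑ q ∈ univ.filter (IsQuadraticFormZMod2 B), f q = ∑ w, f fun x => q₀ x + B w x := by
  refine (sum_nbij (fun w x => q₀ x + B w x) (fun w _ => ?_) (fun w₁ _ w₂ _ h => ?_)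
    (fun q hq => ?_) fun _ _ => rfl).symm
  · simpa using hq₀.add_apply_self w
  · refine (LinearMap.BilinForm.toDual B hB).injective (LinearMap.ext fun x => ?_)
    exact add_left_cancel (congrFun h x)
  · obtain ⟨w, rfl⟩ := hq₀.exists_eq_add_apply hB (mem_filter.mp hq).2
    exact ⟨w, mem_univ w, rfl⟩

lemma sum_isQuadraticFormZMod2_zmod2Sign_add (halt : B.IsAlt) (hB : B.Nondegenerate)
    (x y : V) :
    ∑ q ∈ univ.filter (IsQuadraticFormZMod2 B), zmod2Sign (q x + q y) =
      if x = y then (Fintype.card V : ℤ) else 0 := by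
  obtain ⟨q₀, hq₀⟩ := exists_isQuadraticFormZMod2 halt
  have hterm : ∀ w, q₀ x + B w x + (q₀ y + B w y) = q₀ x + q₀ y + B w (x - y) := by
    intro w
    rw [map_sub, sub_eq_add_neg, ZMod.neg_eq_self_mod_two]
    ring
  simp only [sum_isQuadraticFormZMod2_eq_sum_add_apply hq₀ hB, hterm,
    zmod2Sign_add (q₀ x + q₀ y), ← mul_sum, sum_zmod2Sign_apply_apply hB.2, sub_eq_zero]
  split_ifs with h
  · rw [h, CharTwo.add_self_eq_zero, zmod2Sign_zero, one_mul]
  · rw [mul_zero]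

lemma sum_isQuadraticFormZMod2_gaussSumZMod2_mul (halt : B.IsAlt) (hB : B.Nondegenerate)
    (v : V) :
    ∑ q ∈ univ.filter (IsQuadraticFormZMod2 B), gaussSumZMod2 q * zmod2Sign (q v) =
      Fintype.card V := by
  simp only [gaussSumZMod2, sum_mul, ← zmod2Sign_add]
  rw [sum_comm]
  simp [sum_isQuadraticFormZMod2_zmod2Sign_add halt hB]

end SumOverQuadraticForms

end

theorem sum_even_sub_sum_odd_quadratic_forms_general
    (g : ℕ)
    (V : Type*) [AddCommGroup V] [Module (ZMod 2) V] [Fintype V] [DecidableEq V]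
    (B : V →ₗ[ZMod 2] V →ₗ[ZMod 2] ZMod 2)
    (hdim : Module.finrank (ZMod 2) V = 2 * g)
    (halt : ∀ x : V, B x x = 0)
    (hnd : ∀ x : V, (∀ y : V, B x y = 0) → x = 0)
    (v : V) :
    (∑ q ∈ Finset.univ.filter
        (fun q : V → ZMod 2 => IsQuadraticFormZMod2 B q ∧ IsEvenQF q), zmod2Sign (q v)) -
      (∑ q ∈ Finset.univ.filter
        (fun q : V → ZMod 2 => IsQuadraticFormZMod2 B q ∧ ¬IsEvenQF q), zmod2Sign (q v)) =
      (2 : ℤ) ^ g := by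
  have hB : B.Nondegenerate :=
    (LinearMap.IsAlt.isRefl halt).nondegenerate_iff_separatingLeft.mpr hnd
  have hcard : (Fintype.card V : ℤ) = 2 ^ g * 2 ^ g := by
    rw [Module.card_eq_pow_finrank (K := ZMod 2), ZMod.card, hdim]
    push_cast
    ring
  have hgauss : ∀ q ∈ univ.filter (IsQuadraticFormZMod2 B),
      gaussSumZMod2 q = (if IsEvenQF q then 1 else -1) * 2 ^ g := fun q hq =>
    gaussSumZMod2_eq_ite_mul (by positivity)
      (((mem_filter.mp hq).2.gaussSumZMod2_mul_self hB.2).trans hcard)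
  rw [← filter_filter, ← filter_filter, sub_eq_add_neg, ← sum_neg_distrib, ← sum_ite]
  refine mul_left_cancel₀ (pow_ne_zero g two_ne_zero) ?_
  calc 2 ^ g * ∑ q ∈ univ.filter (IsQuadraticFormZMod2 B),
        (if IsEvenQF q then zmod2Sign (q v) else -zmod2Sign (q v))
      = ∑ q ∈ univ.filter (IsQuadraticFormZMod2 B), gaussSumZMod2 q * zmod2Sign (q v) := by
        rw [mul_sum]
        refine sum_congr rfl fun q hq => ?_
        rw [hgauss q hq]
        split_ifs <;> ring
    _ = 2 ^ g * 2 ^ g := by rw [sum_isQuadraticFormZMod2_gaussSumZMod2_mul halt hB, hcard]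

/-- Let `g ≥ 1` and let `V` be a `2g`-dimensional vector space over `ℤ/2ℤ` with a
nondegenerate alternating bilinear form `B`; let `Q₊` and `Q₋` be the sets of even
and odd quadratic forms on `(V, B)`.  Then for every `v ∈ V`,
`Σ_{q ∈ Q₊} (−1)^{q(v)} − Σ_{q ∈ Q₋} (−1)^{q(v)} = 2^g`. -/
theorem sum_even_sub_sum_odd_quadratic_forms
    (g : ℕ) (hg : 1 ≤ g)
    (V : Type*) [AddCommGroup V] [Module (ZMod 2) V] [Fintype V] [DecidableEq V]
    (B : V →ₗ[ZMod 2] V →ₗ[ZMod 2] ZMod 2)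
    (hdim : Module.finrank (ZMod 2) V = 2 * g)
    (halt : ∀ x : V, B x x = 0)
    (hnd : ∀ x : V, (∀ y : V, B x y = 0) → x = 0)
    (v : V) :
    (∑ q ∈ Finset.univ.filter
        (fun q : V → ZMod 2 => IsQuadraticFormZMod2 B q ∧ IsEvenQF q), zmod2Sign (q v)) -
      (∑ q ∈ Finset.univ.filter
        (fun q : V → ZMod 2 => IsQuadraticFormZMod2 B q ∧ ¬IsEvenQF q), zmod2Sign (q v)) =
      (2 : ℤ) ^ g :=
  sum_even_sub_sum_odd_quadratic_forms_general g V B hdim halt hnd v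
end
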